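/- For every integer n ≥ 1, the cubic x³ − (n+1)x² − (n+3)x + (3n+2) has three real roots θ₁ > θ₂ > θ₃ satisfying θ₁ > θ₂ > φ⁻¹ > −1 > −φ > θ₃, and the multiset of eigenvalues of the adjacency matrix A(R̃_n), counted with multiplicity, consists of θ₁, θ₂, φ⁻¹, −φ and θ₃ each once, together with −1 with multiplicity n. For n = 0, the multiset of eigenvalues of A(R̃_0) = A(C₅) consists of 2 once and each of φ⁻¹ and −φ twice. -/

import Mathlib

/-- The 5-cycle `C₅` on `Fin 5`. -/
def cycle5 : SimpleGraph (Fin 5) :=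
  SimpleGraph.fromRel (fun i j => j = i + 1)

instance : DecidableRel cycle5.Adj := fun i j =>
  decidable_of_iff (i ≠ j ∧ (j = i + 1 ∨ i = j + 1)) Iff.rfl

/-- Duplicating the vertex `v'` of a simple graph `G`: a new vertex (the `Sum.inr` vertex) is
added, adjacent to `v'` and to every neighbor of `v'` in `G`. -/
def dupGraph {V : Type*} (G : SimpleGraph V) (v' : V) : SimpleGraph (V ⊕ Unit) where
  Adj x y :=
    match x, y with
    | Sum.inl a, Sum.inl b => G.Adj a b
    | Sum.inl a, Sum.inr _ => a = v' ∨ G.Adj a v'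
    | Sum.inr _, Sum.inl b => b = v' ∨ G.Adj b v'
    | Sum.inr _, Sum.inr _ => False
  symm := ⟨by
    rintro (a | a) (b | b) h
    · exact G.adj_symm h
    · exact h
    · exact h
    · exact h.elim⟩
  loopless := ⟨by
    rintro (a | a) h
    · exact G.ne_of_adj h rfl
    · exact h.elim⟩

instance dupGraphAdjDecidable {V : Type*} [DecidableEq V] (G : SimpleGraph V)
    [DecidableRel G.Adj] (v' : V) : DecidableRel (dupGraph G v').Adj := fun x y =>
  match x, y with
  | Sum.inl a, Sum.inl b => inferInstanceAs (Decidable (G.Adj a b))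
  | Sum.inl a, Sum.inr _ => inferInstanceAs (Decidable (a = v' ∨ G.Adj a v'))
  | Sum.inr _, Sum.inl b => inferInstanceAs (Decidable (b = v' ∨ G.Adj b v'))
  | Sum.inr _, Sum.inr _ => inferInstanceAs (Decidable False)

/-- The vertex type of the reseminant graph built from `C₅` by the duplications recorded in
the list `l` (each entry records which of the five original cycle vertices is duplicated). -/
def resemType : List (Fin 5) → Type
  | [] => Fin 5
  | _ :: l => resemType l ⊕ Unit

instance resemTypeFintype : ∀ l : List (Fin 5), Fintype (resemType l)
  | [] => inferInstanceAs (Fintype (Fin 5))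
  | _ :: l => letI := resemTypeFintype l; inferInstanceAs (Fintype (resemType l ⊕ Unit))

instance resemTypeDecEq : ∀ l : List (Fin 5), DecidableEq (resemType l)
  | [] => inferInstanceAs (DecidableEq (Fin 5))
  | _ :: l => letI := resemTypeDecEq l; inferInstanceAs (DecidableEq (resemType l ⊕ Unit))

/-- The copy, inside `resemType l`, of an original vertex of the 5-cycle. -/
def origVert : (l : List (Fin 5)) → Fin 5 → resemType l
  | [], i => i
  | _ :: l, i => Sum.inl (origVert l i)

/-- The reseminant graph obtained from the 5-cycle `C₅` by the finite sequence of vertex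
duplications recorded in `l`: for `l = v :: l'`, the vertex (the copy of the original cycle
vertex) `v` is duplicated in the graph built from `l'`. -/
def resemGraph : (l : List (Fin 5)) → SimpleGraph (resemType l)
  | [] => cycle5
  | v :: l => dupGraph (resemGraph l) (origVert l v)

instance resemGraphAdjDecidable : ∀ l : List (Fin 5), DecidableRel (resemGraph l).Adj
  | [] => inferInstanceAs (DecidableRel cycle5.Adj)
  | v :: l =>
    letI := resemGraphAdjDecidable l
    inferInstanceAs (DecidableRel (dupGraph (resemGraph l) (origVert l v)).Adj)

/-- A simple graph is *reseminant* if it is (isomorphic to) a graph obtained from the 5-cycle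
`C₅` by a finite sequence of vertex duplications, each duplicating one of the five original
cycle vertices. -/
def IsReseminant {V : Type*} (Γ : SimpleGraph V) : Prop :=
  ∃ l : List (Fin 5), Nonempty (Γ ≃g resemGraph l)

/-- `R̃_n`: the reseminant graph on `n + 5` vertices obtained from `C₅` by `n` successive
duplications, all duplicating the same fixed vertex `0` of the original 5-cycle. -/
def tildeR (n : ℕ) : SimpleGraph (resemType (List.replicate n 0)) :=
  resemGraph (List.replicate n 0)

instance (n : ℕ) : DecidableRel (tildeR n).Adj :=
  resemGraphAdjDecidable (List.replicate n 0)

/-- The golden ratio `φ = (1 + √5)/2`. -/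
noncomputable def goldenRatio' : ℝ := (1 + Real.sqrt 5) / 2

/-!
The `n` copies of vertex `0` together with `0` itself are pairwise adjacent closed twins, so
`R̃_n` is `C₅` with a clique of `n` closed twins of `0` attached. Subtracting the row of `0` from
the rows of its twins and adding their columns to the column of `0` makes `xI − A(R̃_n)` block
triangular: one block is `(x + 1)I`, the other is `xI − B` for the `5 × 5` quotient matrix `B` of
the equitable partition in which `0` and its twins form one cell. Expanding `det (xI − B)` gives
`det (xI − A(R̃_n)) = (x + 1)ⁿ (x² + x − 1) p_n(x)` with `p_n` the cubic of the statement. The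
roots of `x² + x − 1` are `φ⁻¹` and `−φ`, at both of which `p_n` takes the value `2n`, while
`p_n(2) = −3n`; for `n ≥ 1` the intermediate value theorem thus puts the three roots of `p_n` in
`(−∞, −φ)`, `(φ⁻¹, 2)` and `(2, ∞)`. For `n = 0`, `p_0 = (x − 2)(x² + x − 1)`.
-/

namespace SimpleGraph

variable {V : Type*} (G : SimpleGraph V) (v : V) {T : Type*}

variable (T) in
def addTwins : SimpleGraph (T ⊕ V) where
  Adj x y :=
    match x, y with
    | .inl s, .inl t => s ≠ t
    | .inl _, .inr w => w = v ∨ G.Adj w v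
    | .inr w, .inl _ => w = v ∨ G.Adj w v
    | .inr w, .inr w' => G.Adj w w'
  symm := ⟨by
    rintro (s | w) (t | w') h
    exacts [Ne.symm h, h, h, G.adj_symm h]⟩
  loopless := ⟨by
    rintro (s | w) h
    exacts [h rfl, G.loopless.irrefl _ h]⟩

section Adj

variable {G v}

@[simp] theorem addTwins_adj_inl_inl {s t : T} : (G.addTwins v T).Adj (.inl s) (.inl t) ↔ s ≠ t :=
  Iff.rfl

@[simp] theorem addTwins_adj_inl_inr {s : T} {w : V} :
    (G.addTwins v T).Adj (.inl s) (.inr w) ↔ w = v ∨ G.Adj w v :=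
  Iff.rfl

@[simp] theorem addTwins_adj_inr_inl {w : V} {t : T} :
    (G.addTwins v T).Adj (.inr w) (.inl t) ↔ w = v ∨ G.Adj w v :=
  Iff.rfl

@[simp] theorem addTwins_adj_inr_inr {w w' : V} :
    (G.addTwins v T).Adj (.inr w) (.inr w') ↔ G.Adj w w' :=
  Iff.rfl

end Adj

instance [DecidableEq V] [DecidableEq T] [DecidableRel G.Adj] :
    DecidableRel (G.addTwins v T).Adj := fun x y =>
  match x, y with
  | .inl s, .inl t => inferInstanceAs (Decidable (s ≠ t))
  | .inl _, .inr w => inferInstanceAs (Decidable (w = v ∨ G.Adj w v))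
  | .inr w, .inl _ => inferInstanceAs (Decidable (w = v ∨ G.Adj w v))
  | .inr w, .inr w' => inferInstanceAs (Decidable (G.Adj w w'))

def addTwinsCongr {T' : Type*} (e : T ≃ T') : G.addTwins v T ≃g G.addTwins v T' where
  toEquiv := e.sumCongr (Equiv.refl V)
  map_rel_iff' := by
    rintro (s | w) (t | w') <;> simp

def dupGraphAddTwinsIso : dupGraph (G.addTwins v T) (.inr v) ≃g G.addTwins v (T ⊕ Unit) where
  toEquiv := (Equiv.sumAssoc T V Unit).trans
    (((Equiv.refl T).sumCongr (Equiv.sumComm V Unit)).trans (Equiv.sumAssoc T Unit V).symm)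
  map_rel_iff' := by
    rintro ((s | w) | ⟨⟩) ((t | w') | ⟨⟩) <;> simp [dupGraph]

variable {G} in
def Iso.dupGraph {W : Type*} {H : SimpleGraph W} (e : G ≃g H) {w : W} (h : e v = w) :
    _root_.dupGraph G v ≃g _root_.dupGraph H w where
  toEquiv := e.toEquiv.sumCongr (Equiv.refl Unit)
  map_rel_iff' := by
    subst h
    rintro (x | ⟨⟩) (y | ⟨⟩) <;> simp [_root_.dupGraph, e.injective.eq_iff, e.map_adj_iff]

theorem Iso.charpoly_adjMatrix_eq {R W : Type*} [CommRing R] [Fintype V] [Fintype W]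
    [DecidableEq V] [DecidableEq W] {H : SimpleGraph W} [DecidableRel G.Adj] [DecidableRel H.Adj]
    (e : G ≃g H) : (G.adjMatrix R).charpoly = (H.adjMatrix R).charpoly := by
  rw [← e.reindex_adjMatrix R, Matrix.charpoly_reindex]

end SimpleGraph

open SimpleGraph Polynomial Matrix

theorem exists_iso_tildeR_addTwins (n : ℕ) :
    ∃ e : tildeR n ≃g cycle5.addTwins 0 (Fin n), e (origVert _ 0) = .inr 0 := by
  induction n with
  | zero => exact ⟨⟨(Equiv.emptySum (Fin 0) (Fin 5)).symm, Iff.rfl⟩, rfl⟩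
  | succ n ih =>
    obtain ⟨e, he⟩ := ih
    refine ⟨((Iso.dupGraph _ e he).trans (dupGraphAddTwinsIso cycle5 0)).trans
      (addTwinsCongr cycle5 0 (Fintype.equivFinOfCardEq (by simp))), ?_⟩
    show addTwinsCongr cycle5 0 _ (dupGraphAddTwinsIso cycle5 0 (.inl (e (origVert _ 0)))) = _
    rw [he]
    rfl

namespace SimpleGraph

variable {V : Type*} [DecidableEq V] (G : SimpleGraph V) [DecidableRel G.Adj] (v : V)
  {R T : Type*} [CommRing R]

variable (R) in
/-- The quotient matrix of the equitable partition of `G.addTwins v T`, `k = |T|`, in which `v`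
and its twins form one cell and every other vertex is a cell of its own. -/
def twinQuotientMatrix (k : ℕ) : Matrix V V R :=
  G.adjMatrix R + of fun w w' => if w' = v ∧ (w = v ∨ G.Adj w v) then (k : R) else 0

variable [Fintype V] [Fintype T] [DecidableEq T]

theorem charmatrix_adjMatrix_addTwins :
    charmatrix ((G.addTwins v T).adjMatrix R) =
      fromBlocks (of fun s t => if s = t then X else -1)
        (of fun _ w => if w = v ∨ G.Adj w v then -1 else 0)
        (of fun w _ => if w = v ∨ G.Adj w v then -1 else 0) (charmatrix (G.adjMatrix R)) := by
  refine Matrix.ext fun i j => ?_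
  rcases i with s | w <;> rcases j with t | w'
  · by_cases h : s = t <;> simp [h]
  all_goals simp [charmatrix_apply, diagonal_apply, apply_ite C, neg_ite]

theorem charpoly_adjMatrix_addTwins :
    ((G.addTwins v T).adjMatrix R).charpoly =
      ((X : R[X]) + 1) ^ Fintype.card T * (G.twinQuotientMatrix v R (Fintype.card T)).charpoly := by
  set F : Matrix T V R[X] := vecMulVec 1 (Pi.single v 1)
  have det_unitriangular (B : Matrix T V R[X]) :
      (fromBlocks 1 B 0 1 : Matrix (T ⊕ V) (T ⊕ V) R[X]).det = 1 := by
    rw [det_fromBlocks_zero₂₁, det_one, det_one, one_mul]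
  -- row `v` is subtracted from the twin rows, then the twin columns are added to column `v`
  have block_triangular :
      fromBlocks 1 (-F) 0 1 * charmatrix ((G.addTwins v T).adjMatrix R) * fromBlocks 1 F 0 1 =
        fromBlocks (((X : R[X]) + 1) • 1) 0 (of fun w _ => if w = v ∨ G.Adj w v then -1 else 0)
          (charmatrix (G.twinQuotientMatrix v R (Fintype.card T))) := by
    rw [charmatrix_adjMatrix_addTwins, fromBlocks_multiply, fromBlocks_multiply]
    simp only [Matrix.one_mul, Matrix.zero_mul, Matrix.mul_one, Matrix.mul_zero, zero_add,
      add_zero, F, Matrix.neg_mul, vecMulVec_mul, mul_vecMulVec, single_one_vecMul]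
    congr 1
    · ext s t : 1
      by_cases h : s = t <;> simp [h, one_apply]
    · ext s w : 1
      by_cases h : w = v
      · subst h
        simp [vecMulVec_apply, mulVec, dotProduct, ite_add]
      · simp [vecMulVec_apply, h, Ne.symm h, G.adj_comm w v]
        split_ifs <;> simp
    · ext w w' : 1
      by_cases h : w' = v
      · subst h
        simp [vecMulVec_apply, charmatrix_apply, twinQuotientMatrix, mulVec, dotProduct_one,
          apply_ite C]
        split_ifs <;> ring
      · simp [vecMulVec_apply, charmatrix_apply, twinQuotientMatrix, h]
  calc ((G.addTwins v T).adjMatrix R).charpoly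
      = (fromBlocks 1 (-F) 0 1 * charmatrix ((G.addTwins v T).adjMatrix R) *
          fromBlocks 1 F 0 1).det := by
        rw [det_mul, det_mul, det_unitriangular, det_unitriangular, one_mul, mul_one, charpoly]
    _ = _ := by
        rw [block_triangular, det_fromBlocks_zero₁₂, det_smul, det_one, mul_one, charpoly]

end SimpleGraph

noncomputable def tildeRCubic (m : ℝ) : ℝ[X] :=
  X ^ 3 - (C m + 1) * X ^ 2 - (C m + 3) * X + (3 * C m + 2)

theorem charpoly_twinQuotientMatrix_cycle5 (k : ℕ) :
    (cycle5.twinQuotientMatrix 0 ℝ k).charpoly = (X ^ 2 + X - 1) * tildeRCubic k := by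
  have h : charmatrix (cycle5.twinQuotientMatrix 0 ℝ k) =
      !![X - C (k : ℝ), -1, 0, 0, -1;
        -C ((k : ℝ) + 1), X, -1, 0, 0;
        0, -1, X, -1, 0;
        0, 0, -1, X, -1;
        -C ((k : ℝ) + 1), 0, 0, -1, X] := by
    ext i j : 1
    fin_cases i <;> fin_cases j <;> simp +decide [twinQuotientMatrix, adjMatrix_apply] <;> ring
  rw [charpoly, h]
  simp [det_succ_row_zero, Fin.sum_univ_succ, Fin.succAbove, Fin.castSucc, Fin.castAdd,
    Fin.castLE, tildeRCubic]
  ring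

theorem charpoly_tildeR (n : ℕ) :
    ((tildeR n).adjMatrix ℝ).charpoly = (X + 1) ^ n * ((X ^ 2 + X - 1) * tildeRCubic n) := by
  obtain ⟨e, -⟩ := exists_iso_tildeR_addTwins n
  rw [e.charpoly_adjMatrix_eq, charpoly_adjMatrix_addTwins, Fintype.card_fin,
    charpoly_twinQuotientMatrix_cycle5]

namespace Polynomial

theorem eq_multiset_prod_X_sub_C_of_isRoot {R : Type*} [CommRing R] [IsDomain R] {p : R[X]}
    {s : Multiset R} (hp : p.Monic) (hdeg : p.natDegree = Multiset.card s) (hs : s.Nodup)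
    (hroot : ∀ a ∈ s, p.IsRoot a) : p = (s.map fun a => X - C a).prod := by
  have hle : s ≤ p.roots :=
    (Multiset.le_iff_subset hs).2 fun a ha => (mem_roots hp.ne_zero).2 (hroot a ha)
  refine eq_of_monic_of_dvd_of_natDegree_le (monic_multisetProd_X_sub_C s) hp
    ((Multiset.prod_X_sub_C_dvd_iff_le_roots hp.ne_zero s).2 hle) ?_
  rw [natDegree_multiset_prod_X_sub_C_eq_card, hdeg]

theorem exists_isRoot_Ioo_of_mul_neg {p : ℝ[X]} {a b : ℝ} (hab : a ≤ b)
    (h : p.eval a * p.eval b < 0) : ∃ x ∈ Set.Ioo a b, p.IsRoot x := by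
  rcases mul_neg_iff.1 h with ⟨ha, hb⟩ | ⟨ha, hb⟩
  · exact intermediate_value_Ioo' hab p.continuousOn ⟨hb, ha⟩
  · exact intermediate_value_Ioo hab p.continuousOn ⟨ha, hb⟩

end Polynomial

theorem goldenRatio'_eq : goldenRatio' = Real.goldenRatio := rfl

theorem X_sq_add_X_sub_one_eq :
    (X ^ 2 + X - 1 : ℝ[X]) = (X - C goldenRatio'⁻¹) * (X - C (-goldenRatio')) := by
  have hsum : goldenRatio'⁻¹ + -goldenRatio' = -1 := by
    rw [goldenRatio'_eq, Real.inv_goldenRatio, ← Real.goldenRatio_add_goldenConj]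
    ring
  have hprod : goldenRatio'⁻¹ * -goldenRatio' = -1 := by
    rw [goldenRatio'_eq, mul_neg, inv_mul_cancel₀ Real.goldenRatio_ne_zero]
  calc (X ^ 2 + X - 1 : ℝ[X])
      = X ^ 2 - C (goldenRatio'⁻¹ + -goldenRatio') * X + C (goldenRatio'⁻¹ * -goldenRatio') := by
        rw [hsum, hprod]; simp; ring
    _ = _ := by rw [C_add, C_mul]; ring

theorem tildeRCubic_zero : tildeRCubic 0 = (X - C 2) * (X ^ 2 + X - 1) := by
  simp [tildeRCubic, C_ofNat]; ring

theorem tildeRCubic_monic (m : ℝ) : (tildeRCubic m).Monic := by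
  unfold tildeRCubic; monicity!

theorem natDegree_tildeRCubic (m : ℝ) : (tildeRCubic m).natDegree = 3 := by
  unfold tildeRCubic; compute_degree!

theorem eval_tildeRCubic_of_sq_add_self_sub_one {m t : ℝ} (ht : t ^ 2 + t - 1 = 0) :
    (tildeRCubic m).eval t = 2 * m := by
  simp [tildeRCubic]; linear_combination (t - (m + 2)) * ht

theorem eval_tildeRCubic_goldenRatio_inv (m : ℝ) : (tildeRCubic m).eval goldenRatio'⁻¹ = 2 * m :=
  eval_tildeRCubic_of_sq_add_self_sub_one <| by
    simpa using congrArg (eval goldenRatio'⁻¹) X_sq_add_X_sub_one_eq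

theorem eval_tildeRCubic_neg_goldenRatio (m : ℝ) : (tildeRCubic m).eval (-goldenRatio') = 2 * m :=
  eval_tildeRCubic_of_sq_add_self_sub_one <| by
    simpa using congrArg (eval (-goldenRatio')) X_sq_add_X_sub_one_eq

theorem exists_roots_tildeRCubic {m : ℝ} (hm : 0 < m) :
    ∃ θ₁ θ₂ θ₃ : ℝ, tildeRCubic m = ((θ₁ ::ₘ θ₂ ::ₘ {θ₃}).map fun a => X - C a).prod ∧
      2 < θ₁ ∧ goldenRatio'⁻¹ < θ₂ ∧ θ₂ < 2 ∧ θ₃ < -goldenRatio' := by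
  have hφ : 1 < goldenRatio' := Real.one_lt_goldenRatio
  have hφ' : goldenRatio' < 2 := Real.goldenRatio_lt_two
  have hφinv : goldenRatio'⁻¹ < 1 := inv_lt_one_of_one_lt₀ hφ
  have hφinv_pos : 0 < goldenRatio'⁻¹ := inv_pos.2 (zero_lt_one.trans hφ)
  have eval_two : (tildeRCubic m).eval 2 = -(3 * m) := by simp [tildeRCubic]; ring
  have eval_large : (tildeRCubic m).eval (m + 3) = (m + 3) ^ 2 + 3 * m + 2 := by
    simp [tildeRCubic]; ring
  have eval_small :
      (tildeRCubic m).eval (-(m + 3)) = -((m + 3) ^ 2 * (2 * m + 3)) + 3 * m + 2 := by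
    simp [tildeRCubic]; ring
  obtain ⟨θ₁, ⟨h₁, -⟩, hr₁⟩ := exists_isRoot_Ioo_of_mul_neg (a := 2) (b := m + 3)
    (by linarith) (by rw [eval_two, eval_large]; nlinarith)
  obtain ⟨θ₂, ⟨h₂, h₂'⟩, hr₂⟩ := exists_isRoot_Ioo_of_mul_neg (a := goldenRatio'⁻¹) (b := 2)
    (by linarith) (by rw [eval_tildeRCubic_goldenRatio_inv, eval_two]; nlinarith)
  obtain ⟨θ₃, ⟨-, h₃⟩, hr₃⟩ := exists_isRoot_Ioo_of_mul_neg (a := -(m + 3)) (b := -goldenRatio')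
    (by linarith) (by
      rw [eval_small, eval_tildeRCubic_neg_goldenRatio]
      exact mul_neg_of_neg_of_pos (by nlinarith) (by linarith))
  refine ⟨θ₁, θ₂, θ₃, eq_multiset_prod_X_sub_C_of_isRoot (tildeRCubic_monic m)
    (by simp [natDegree_tildeRCubic]) ?_ ?_, h₁, h₂, h₂', h₃⟩
  · simp only [Multiset.nodup_cons, Multiset.mem_cons, Multiset.mem_singleton,
      Multiset.nodup_singleton]
    refine ⟨?_, ?_, trivial⟩ <;> rintro (h | h) <;> linarith
  · simp only [Multiset.mem_cons, Multiset.mem_singleton]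
    rintro a (rfl | rfl | rfl) <;> assumption

theorem roots_charpoly_tildeR (n : ℕ) {s : Multiset ℝ}
    (hs : tildeRCubic n = (s.map fun a => X - C a).prod) :
    ((tildeR n).adjMatrix ℝ).charpoly.roots =
      goldenRatio'⁻¹ ::ₘ -goldenRatio' ::ₘ s + Multiset.replicate n (-1) := by
  suffices ((tildeR n).adjMatrix ℝ).charpoly =
      ((goldenRatio'⁻¹ ::ₘ -goldenRatio' ::ₘ s + Multiset.replicate n (-1)).map
        fun a => X - C a).prod by
    rw [this, roots_multiset_prod_X_sub_C]
  rw [charpoly_tildeR, hs, X_sq_add_X_sub_one_eq]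
  simp [Multiset.map_replicate]
  ring

/-- For every integer `n ≥ 1`, the cubic
`x³ − (n+1)x² − (n+3)x + (3n+2)` has three real roots `θ₁ > θ₂ > θ₃` satisfying
`θ₁ > θ₂ > φ⁻¹ > −1 > −φ > θ₃`, and the multiset of eigenvalues of `A(R̃_n)`, counted with
multiplicity (the multiset of roots of the characteristic polynomial), consists of `θ₁`, `θ₂`,
`φ⁻¹`, `−φ` and `θ₃` each once, together with `−1` with multiplicity `n`. For `n = 0`, the
multiset of eigenvalues of `A(R̃_0) = A(C₅)` consists of `2` once and each of `φ⁻¹` and `−φ`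
twice. -/
theorem spectrum_tildeR :
    (∀ n : ℕ, 1 ≤ n → ∃ θ₁ θ₂ θ₃ : ℝ,
      (∀ x : ℝ, x ^ 3 - ((n : ℝ) + 1) * x ^ 2 - ((n : ℝ) + 3) * x + (3 * (n : ℝ) + 2) =
        (x - θ₁) * (x - θ₂) * (x - θ₃)) ∧
      θ₂ < θ₁ ∧ goldenRatio'⁻¹ < θ₂ ∧ (-1 : ℝ) < goldenRatio'⁻¹ ∧
      -goldenRatio' < (-1 : ℝ) ∧ θ₃ < -goldenRatio' ∧
      ((tildeR n).adjMatrix ℝ).charpoly.roots =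
        θ₁ ::ₘ θ₂ ::ₘ goldenRatio'⁻¹ ::ₘ (-goldenRatio') ::ₘ θ₃ ::ₘ
          Multiset.replicate n (-1)) ∧
    ((tildeR 0).adjMatrix ℝ).charpoly.roots =
      2 ::ₘ goldenRatio'⁻¹ ::ₘ goldenRatio'⁻¹ ::ₘ (-goldenRatio') ::ₘ
        (-goldenRatio') ::ₘ 0 := by
  have hφ : 1 < goldenRatio' := Real.one_lt_goldenRatio
  refine ⟨fun n hn => ?_, ?_⟩
  · obtain ⟨θ₁, θ₂, θ₃, hfac, h₁, h₂, h₂', h₃⟩ :=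
      exists_roots_tildeRCubic (m := n) (by exact_mod_cast hn)
    refine ⟨θ₁, θ₂, θ₃, fun x => ?_, by linarith, h₂,
      by linarith [inv_pos.2 (zero_lt_one.trans hφ)], by linarith, h₃, ?_⟩
    · simpa [tildeRCubic, mul_assoc] using congrArg (eval x) hfac
    · rw [roots_charpoly_tildeR n hfac]
      simp only [← Multiset.singleton_add]
      abel
  · rw [roots_charpoly_tildeR 0 (s := 2 ::ₘ goldenRatio'⁻¹ ::ₘ {-goldenRatio'})]
    · simp only [← Multiset.singleton_add, Multiset.replicate_zero]
      abel
    · rw [Nat.cast_zero, tildeRCubic_zero, X_sq_add_X_sub_one_eq]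
      simp
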